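/- arXiv:2206.15177 — 5 statements merged into one kernel-verified Lean document; each statement's English description precedes it below -/
import Mathlib

section
/- Let d_x, d_y ≥ 1 and let l : ℝ^{d_x} × ℝ^{d_y} → ℝ be differentiable with ‖∇l(x,y)‖ ≤ C for all (x,y) and with ∇l Lipschitz with constant L_0. Then for every fixed x₀ ∈ ℝ^{d_x} and every pair of Borel probability measures μ, ν on ℝ^{d_x} × ℝ^{d_y}, the vector-valued integrals satisfy ‖∫ ∇_x l(x₀, y) dμ(x,y) − ∫ ∇_x l(x₀, y) dν(x,y)‖ ≤ (C + L_0) · d_BL(μ, ν). -/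
open MeasureTheory NNReal

/-- The dual bounded-Lipschitz distance between two (probability) measures:
the supremum of `∫ f dμ - ∫ f dν` over bounded Lipschitz `f` with
`‖f‖_∞ + Lip f ≤ 1`. -/
noncomputable def dBL {S : Type*} [MetricSpace S] [MeasurableSpace S]
    (μ ν : Measure S) : ℝ :=
  sSup {r : ℝ | ∃ f : S → ℝ, (∃ a b : ℝ, 0 ≤ a ∧ 0 ≤ b ∧ a + b ≤ 1 ∧
      (∀ x, |f x| ≤ a) ∧ LipschitzWith b.toNNReal f) ∧
    r = (∫ x, f x ∂μ) - ∫ x, f x ∂ν}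

/-- Gradient of `l` in its first argument. -/
noncomputable def gradX {dx dy : ℕ}
    (l : EuclideanSpace ℝ (Fin dx) × EuclideanSpace ℝ (Fin dy) → ℝ)
    (x : EuclideanSpace ℝ (Fin dx)) (y : EuclideanSpace ℝ (Fin dy)) :
    EuclideanSpace ℝ (Fin dx) :=
  gradient (fun x' => l (x', y)) x

/-- Gradient of `l` in its second argument. -/
noncomputable def gradY {dx dy : ℕ}
    (l : EuclideanSpace ℝ (Fin dx) × EuclideanSpace ℝ (Fin dy) → ℝ)
    (x : EuclideanSpace ℝ (Fin dx)) (y : EuclideanSpace ℝ (Fin dy)) :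
    EuclideanSpace ℝ (Fin dy) :=
  gradient (fun y' => l (x, y')) y

lemma dBL_bddAbove {S : Type*} [MetricSpace S] [MeasurableSpace S]
    (μ ν : Measure S) [IsProbabilityMeasure μ] [IsProbabilityMeasure ν] :
    BddAbove {r : ℝ | ∃ f : S → ℝ, (∃ a b : ℝ, 0 ≤ a ∧ 0 ≤ b ∧ a + b ≤ 1 ∧
      (∀ x, |f x| ≤ a) ∧ LipschitzWith b.toNNReal f) ∧
    r = (∫ x, f x ∂μ) - ∫ x, f x ∂ν} := by
  refine ⟨2, ?_⟩
  rintro r ⟨f, ⟨a, b, ha, hb, hab, hfa, _⟩, rfl⟩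
  have h1 : ‖∫ x, f x ∂μ‖ ≤ a := by
    have := norm_integral_le_of_norm_le_const (μ := μ) (f := f)
      (ae_of_all _ (fun x => by simpa using hfa x))
    simpa using this
  have h2 : ‖∫ x, f x ∂ν‖ ≤ a := by
    have := norm_integral_le_of_norm_le_const (μ := ν) (f := f)
      (ae_of_all _ (fun x => by simpa using hfa x))
    simpa using this
  have h3 : (∫ x, f x ∂μ) - ∫ x, f x ∂ν ≤ ‖(∫ x, f x ∂μ) - ∫ x, f x ∂ν‖ :=
    le_abs_self _
  have := norm_sub_le (∫ x, f x ∂μ) (∫ x, f x ∂ν)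
  linarith

lemma dBL_nonneg {S : Type*} [MetricSpace S] [MeasurableSpace S]
    (μ ν : Measure S) [IsProbabilityMeasure μ] [IsProbabilityMeasure ν] :
    0 ≤ dBL μ ν := by
  apply le_csSup (dBL_bddAbove μ ν)
  exact ⟨0, ⟨0, 0, le_refl _, le_refl _, by norm_num, fun x => by simp,
    by simpa using LipschitzWith.const (0:ℝ)⟩, by simp⟩

theorem stmt0 {dx dy : ℕ} (hdx : 1 ≤ dx) (hdy : 1 ≤ dy)
    (l : EuclideanSpace ℝ (Fin dx) × EuclideanSpace ℝ (Fin dy) → ℝ)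
    (C L₀ : ℝ≥0) (hdiff : Differentiable ℝ l)
    (hbound : ∀ x y, ‖(gradX l x y, gradY l x y)‖ ≤ C)
    (hlip : LipschitzWith L₀
      (fun p : EuclideanSpace ℝ (Fin dx) × EuclideanSpace ℝ (Fin dy) =>
        (gradX l p.1 p.2, gradY l p.1 p.2)))
    (x₀ : EuclideanSpace ℝ (Fin dx))
    (μ ν : Measure (EuclideanSpace ℝ (Fin dx) × EuclideanSpace ℝ (Fin dy)))
    [IsProbabilityMeasure μ] [IsProbabilityMeasure ν] :
    ‖(∫ z, gradX l x₀ z.2 ∂μ) - ∫ z, gradX l x₀ z.2 ∂ν‖ ≤ (C + L₀) * dBL μ ν := by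
  set g : EuclideanSpace ℝ (Fin dx) × EuclideanSpace ℝ (Fin dy) →
      EuclideanSpace ℝ (Fin dx) := fun z => gradX l x₀ z.2 with hg
  -- g is bounded by C
  have hgC : ∀ z, ‖g z‖ ≤ C := fun z =>
    le_trans (norm_fst_le (gradX l x₀ z.2, gradY l x₀ z.2)) (hbound x₀ z.2)
  -- g is L₀-Lipschitz
  have hgL : ∀ z z', ‖g z - g z'‖ ≤ L₀ * dist z z' := by
    intro z z'
    have h1 := hlip.dist_le_mul (x₀, z.2) (x₀, z'.2)
    have h2 : dist (gradX l x₀ z.2) (gradX l x₀ z'.2) ≤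
        dist (((gradX l x₀ z.2, gradY l x₀ z.2)) :
            EuclideanSpace ℝ (Fin dx) × EuclideanSpace ℝ (Fin dy))
             ((gradX l x₀ z'.2, gradY l x₀ z'.2)) := by
      rw [Prod.dist_eq]; exact le_max_left _ _
    have h3 : dist (((x₀, z.2)) :
        EuclideanSpace ℝ (Fin dx) × EuclideanSpace ℝ (Fin dy)) (x₀, z'.2) ≤ dist z z' := by
      rw [dist_prod_same_left, Prod.dist_eq (x := z)]
      exact le_max_right _ _
    rw [← dist_eq_norm]
    calc dist (g z) (g z') ≤ L₀ * dist ((x₀, z.2) : _ × _) (x₀, z'.2) :=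
          le_trans h2 h1
      _ ≤ L₀ * dist z z' := by
          exact mul_le_mul_of_nonneg_left h3 (by positivity)
  have hgcont : Continuous g := by
    have : Continuous (fun p : EuclideanSpace ℝ (Fin dx) × EuclideanSpace ℝ (Fin dy) =>
        (gradX l p.1 p.2, gradY l p.1 p.2)) := hlip.continuous
    have h2 : Continuous (fun z : EuclideanSpace ℝ (Fin dx) × EuclideanSpace ℝ (Fin dy) =>
        ((x₀, z.2) : EuclideanSpace ℝ (Fin dx) × EuclideanSpace ℝ (Fin dy))) := by
      fun_prop
    exact (continuous_fst.comp (this.comp h2))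
  have hint : ∀ (κ : Measure (EuclideanSpace ℝ (Fin dx) × EuclideanSpace ℝ (Fin dy)))
      [IsProbabilityMeasure κ], Integrable g κ := by
    intro κ _
    exact (integrable_const (C : ℝ)).mono' hgcont.aestronglyMeasurable
      (ae_of_all _ hgC)
  set w := (∫ z, g z ∂μ) - ∫ z, g z ∂ν with hw
  by_cases hw0 : w = 0
  · rw [hw0]
    simp only [norm_zero]
    exact mul_nonneg (by positivity) (dBL_nonneg μ ν)
  · -- main case
    have hC0 : (0:ℝ) ≤ C := C.coe_nonneg
    have hL0 : (0:ℝ) ≤ L₀ := L₀.coe_nonneg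
    have hs : (0:ℝ) < (C:ℝ) + L₀ := by
      rcases lt_or_eq_of_le (by positivity : (0:ℝ) ≤ (C:ℝ) + L₀) with h | h
      · exact h
      · exfalso
        apply hw0
        have hCz : (C:ℝ) = 0 := by linarith
        have hg0 : ∀ z, g z = 0 := fun z =>
          norm_le_zero_iff.mp (by rw [← hCz]; exact hgC z)
        simp [hw, funext hg0]
    set s : ℝ := (C:ℝ) + L₀ with hsdef
    set v : EuclideanSpace ℝ (Fin dx) := ‖w‖⁻¹ • w with hv
    have hwn : (0:ℝ) < ‖w‖ := norm_pos_iff.mpr hw0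
    have hvn : ‖v‖ = 1 := by
      rw [hv, norm_smul, norm_inv, norm_norm, inv_mul_cancel₀ hwn.ne']
    set f : EuclideanSpace ℝ (Fin dx) × EuclideanSpace ℝ (Fin dy) → ℝ :=
      fun z => (inner ℝ v (g z) : ℝ) / s with hf
    have hfa : ∀ z, |f z| ≤ (C:ℝ) / s := by
      intro z
      rw [hf]
      simp only [abs_div, abs_of_pos hs]
      gcongr
      calc |(inner ℝ v (g z) : ℝ)| ≤ ‖v‖ * ‖g z‖ := abs_real_inner_le_norm v (g z)
        _ = ‖g z‖ := by rw [hvn, one_mul]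
        _ ≤ C := hgC z
    have hflip : LipschitzWith ((L₀:ℝ)/s).toNNReal f := by
      apply LipschitzWith.of_dist_le_mul
      intro z z'
      have hcoe : (((L₀:ℝ)/s).toNNReal : ℝ) = (L₀:ℝ)/s :=
        Real.coe_toNNReal _ (by positivity)
      rw [hcoe, Real.dist_eq, hf]
      have : f z - f z' = (inner ℝ v (g z - g z') : ℝ) / s := by
        rw [hf, inner_sub_right]
        ring
      simp only [hf] at this ⊢
      rw [show (inner ℝ v (g z) : ℝ)/s - (inner ℝ v (g z') : ℝ)/s
        = (inner ℝ v (g z - g z') : ℝ)/s by rw [inner_sub_right]; ring]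
      rw [abs_div, abs_of_pos hs, div_le_iff₀ hs]
      calc |(inner ℝ v (g z - g z') : ℝ)| ≤ ‖v‖ * ‖g z - g z'‖ :=
            abs_real_inner_le_norm _ _
        _ = ‖g z - g z'‖ := by rw [hvn, one_mul]
        _ ≤ (L₀:ℝ) * dist z z' := hgL z z'
        _ = (L₀:ℝ) / s * dist z z' * s := by field_simp
    have hintf : ∀ (κ : Measure (EuclideanSpace ℝ (Fin dx) × EuclideanSpace ℝ (Fin dy)))
        [IsProbabilityMeasure κ], ∫ z, f z ∂κ = (inner ℝ v (∫ z, g z ∂κ) : ℝ) / s := by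
      intro κ _
      rw [hf]
      simp only [integral_div]
      rw [integral_inner (hint κ) v]
    have hmem : (‖w‖ / s) ∈ {r : ℝ | ∃ f : _ → ℝ, (∃ a b : ℝ, 0 ≤ a ∧ 0 ≤ b ∧ a + b ≤ 1 ∧
        (∀ x, |f x| ≤ a) ∧ LipschitzWith b.toNNReal f) ∧
        r = (∫ x, f x ∂μ) - ∫ x, f x ∂ν} := by
      refine ⟨f, ⟨(C:ℝ)/s, (L₀:ℝ)/s, by positivity, by positivity, ?_, hfa, hflip⟩, ?_⟩
      · rw [← add_div, div_self hs.ne']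
      · rw [hintf μ, hintf ν, div_sub_div_same, ← inner_sub_right]
        have : (inner ℝ v w : ℝ) = ‖w‖ := by
          rw [hv, real_inner_smul_left, real_inner_self_eq_norm_sq]
          field_simp
        rw [← hw, this]
    have hle : ‖w‖ / s ≤ dBL μ ν := le_csSup (dBL_bddAbove μ ν) hmem
    calc ‖w‖ = ‖w‖ / s * s := by field_simp
      _ ≤ dBL μ ν * s := mul_le_mul_of_nonneg_right hle hs.le
      _ = s * dBL μ ν := mul_comm _ _
end

section
/- Let d_x, d_y ≥ 1, set Z = ℝ^{d_x} × ℝ^{d_y}, and let l : Z → ℝ be differentiable with ‖∇l(z)‖ ≤ C for all z ∈ Z and with ∇l Lipschitz with constant L_0. Define b₁(z, η) = −∫_Z ∇_x l(z₁, y) dη(x,y) and b₂(z, η) = ∫_Z ∇_y l(x, z₂) dη(x,y) for z = (z₁, z₂) ∈ Z and η a Borel probability measure on Z. Then for all z, z' ∈ Z and all Borel probability measures μ, ν on Z, ‖b₁(z, μ) − b₁(z', ν)‖ + ‖b₂(z, μ) − b₂(z', ν)‖ ≤ 2(C + L_0) · d_BL(μ, ν) + L_0 · (‖z₁ − z₁'‖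 + ‖z₂ − z₂'‖); in particular the drift b = (b₁, b₂) is uniformly Lipschitz in (z, η) with respect to the metric ‖z − z'‖ + d_BL(μ, ν). -/
open MeasureTheory NNReal
lemma le_dBL {S : Type*} [MetricSpace S] [MeasurableSpace S]
    (μ ν : Measure S) [IsProbabilityMeasure μ] [IsProbabilityMeasure ν]
    (f : S → ℝ) (a b : ℝ) (ha : 0 ≤ a) (hb : 0 ≤ b) (hab : a + b ≤ 1)
    (hfa : ∀ x, |f x| ≤ a) (hfl : LipschitzWith b.toNNReal f) :
    (∫ x, f x ∂μ) - ∫ x, f x ∂ν ≤ dBL μ ν :=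
  le_csSup (dBL_bddAbove μ ν) ⟨f, ⟨a, b, ha, hb, hab, hfa, hfl⟩, rfl⟩

noncomputable def bOne {dx dy : ℕ}
    (l : EuclideanSpace ℝ (Fin dx) × EuclideanSpace ℝ (Fin dy) → ℝ)
    (z : EuclideanSpace ℝ (Fin dx) × EuclideanSpace ℝ (Fin dy))
    (η : Measure (EuclideanSpace ℝ (Fin dx) × EuclideanSpace ℝ (Fin dy))) :
    EuclideanSpace ℝ (Fin dx) :=
  - ∫ w, gradX l z.1 w.2 ∂η
noncomputable def bTwo {dx dy : ℕ}
    (l : EuclideanSpace ℝ (Fin dx) × EuclideanSpace ℝ (Fin dy) → ℝ)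
    (z : EuclideanSpace ℝ (Fin dx) × EuclideanSpace ℝ (Fin dy))
    (η : Measure (EuclideanSpace ℝ (Fin dx) × EuclideanSpace ℝ (Fin dy))) :
    EuclideanSpace ℝ (Fin dy) :=
  ∫ w, gradY l w.1 z.2 ∂η
lemma integrable_of_bdd_lip {S : Type*} [MetricSpace S] [MeasurableSpace S]
    [OpensMeasurableSpace S] [SecondCountableTopology S]
    {H : Type*} [NormedAddCommGroup H]
    (ρ : Measure S) [IsProbabilityMeasure ρ]
    (g : S → H) (C L : ℝ≥0) (hb : ∀ w, ‖g w‖ ≤ C) (hl : LipschitzWith L g) :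
    Integrable g ρ := by
  refine Integrable.mono' (integrable_const (C : ℝ)) (hl.continuous.aestronglyMeasurable)
    (Filter.Eventually.of_forall hb)

lemma key_dual {S : Type*} [MetricSpace S] [MeasurableSpace S]
    [OpensMeasurableSpace S] [SecondCountableTopology S]
    {H : Type*} [NormedAddCommGroup H] [InnerProductSpace ℝ H] [CompleteSpace H]
    (μ ν : Measure S) [IsProbabilityMeasure μ] [IsProbabilityMeasure ν]
    (g : S → H) (C L : ℝ≥0) (hb : ∀ w, ‖g w‖ ≤ C) (hl : LipschitzWith L g) :
    ‖(∫ w, g w ∂μ) - ∫ w, g w ∂ν‖ ≤ ((C : ℝ) + L) * dBL μ ν := by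
  have hRHS : 0 ≤ ((C : ℝ) + L) * dBL μ ν :=
    mul_nonneg (by positivity) (dBL_nonneg μ ν)
  set v := (∫ w, g w ∂μ) - ∫ w, g w ∂ν with hv
  rcases eq_or_ne v 0 with h0 | h0
  · simpa [h0] using hRHS
  have hCL : 0 < (C : ℝ) + L := by
    rcases (lt_or_eq_of_le (by positivity : (0:ℝ) ≤ (C:ℝ) + L)) with h | h
    · exact h
    · exfalso
      have hC0 : (C : ℝ) = 0 := by
        linarith [C.coe_nonneg, L.coe_nonneg]
      have : ∀ w, g w = 0 := fun w => norm_le_zero_iff.mp (by rw [← hC0]; exact hb w)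
      apply h0
      simp [hv, this]
  set u : H := ‖v‖⁻¹ • v with hu
  have hvn : (0:ℝ) < ‖v‖ := norm_pos_iff.mpr h0
  have hun : ‖u‖ = 1 := by
    rw [hu, norm_smul, norm_inv, norm_norm, inv_mul_cancel₀ (ne_of_gt hvn)]
  set f : S → ℝ := fun w => (inner ℝ u (g w) : ℝ) / ((C : ℝ) + L) with hf
  have hfa : ∀ w, |f w| ≤ (C : ℝ) / ((C : ℝ) + L) := by
    intro w
    rw [hf, abs_div, abs_of_pos hCL]
    gcongr
    calc |(inner ℝ u (g w) : ℝ)| ≤ ‖u‖ * ‖g w‖ := abs_real_inner_le_norm u (g w)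
      _ ≤ 1 * C := by rw [hun]; simpa using hb w
      _ = C := one_mul _
  have hfl : LipschitzWith ((L : ℝ) / ((C : ℝ) + L)).toNNReal f := by
    apply LipschitzWith.of_dist_le_mul
    intro w w'
    rw [Real.coe_toNNReal _ (by positivity)]
    rw [Real.dist_eq, hf, div_sub_div_same, abs_div, abs_of_pos hCL, div_mul_eq_mul_div]
    gcongr
    calc |(inner ℝ u (g w) : ℝ) - inner ℝ u (g w')| = |(inner ℝ u (g w - g w') : ℝ)| := by
          rw [inner_sub_right]
      _ ≤ ‖u‖ * ‖g w - g w'‖ := abs_real_inner_le_norm _ _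
      _ = ‖g w - g w'‖ := by rw [hun, one_mul]
      _ ≤ L * dist w w' := by rw [← dist_eq_norm]; exact hl.dist_le_mul w w'
  have hint : ∀ (ρ : Measure S) [IsProbabilityMeasure ρ],
      ∫ w, f w ∂ρ = (inner ℝ u (∫ w, g w ∂ρ) : ℝ) / ((C : ℝ) + L) := by
    intro ρ _
    rw [hf]
    rw [integral_div]
    congr 1
    exact integral_inner (integrable_of_bdd_lip ρ g C L hb hl) u
  have hle := le_dBL μ ν f ((C : ℝ) / ((C : ℝ) + L)) ((L : ℝ) / ((C : ℝ) + L))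
    (by positivity) (by positivity) (by rw [← add_div, div_self (ne_of_gt hCL)])
    hfa hfl
  rw [hint μ, hint ν, div_sub_div_same, ← inner_sub_right, ← hv] at hle
  have huv : (inner ℝ u v : ℝ) = ‖v‖ := by
    rw [hu, real_inner_smul_left, real_inner_self_eq_norm_sq]
    field_simp
  rw [huv] at hle
  rw [div_le_iff₀ hCL] at hle
  linarith [hle]

theorem stmt2 {dx dy : ℕ} (hdx : 1 ≤ dx) (hdy : 1 ≤ dy)
    (l : EuclideanSpace ℝ (Fin dx) × EuclideanSpace ℝ (Fin dy) → ℝ)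
    (C L₀ : ℝ≥0) (hdiff : Differentiable ℝ l)
    (hbound : ∀ x y, ‖(gradX l x y, gradY l x y)‖ ≤ C)
    (hlip : LipschitzWith L₀
      (fun p : EuclideanSpace ℝ (Fin dx) × EuclideanSpace ℝ (Fin dy) =>
        (gradX l p.1 p.2, gradY l p.1 p.2)))
    (z z' : EuclideanSpace ℝ (Fin dx) × EuclideanSpace ℝ (Fin dy))
    (μ ν : Measure (EuclideanSpace ℝ (Fin dx) × EuclideanSpace ℝ (Fin dy)))
    [IsProbabilityMeasure μ] [IsProbabilityMeasure ν] :
    ‖bOne l z μ - bOne l z' ν‖ + ‖bTwo l z μ - bTwo l z' ν‖ ≤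
      2 * (C + L₀) * dBL μ ν + L₀ * (‖z.1 - z'.1‖ + ‖z.2 - z'.2‖) := by
  -- bounds on the partial gradients
  have hb1 : ∀ (a : EuclideanSpace ℝ (Fin dx)) (w : EuclideanSpace ℝ (Fin dx) × EuclideanSpace ℝ (Fin dy)), ‖gradX l a w.2‖ ≤ C := fun a w =>
    le_trans (norm_fst_le (gradX l a w.2, gradY l a w.2)) (hbound a w.2)
  have hb2 : ∀ (b : EuclideanSpace ℝ (Fin dy)) (w : EuclideanSpace ℝ (Fin dx) × EuclideanSpace ℝ (Fin dy)), ‖gradY l w.1 b‖ ≤ C := fun b w =>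
    le_trans (norm_snd_le (gradX l w.1 b, gradY l w.1 b)) (hbound w.1 b)
  -- Lipschitz in w
  have hlw1 : ∀ a : EuclideanSpace ℝ (Fin dx),
      LipschitzWith L₀ (fun w : EuclideanSpace ℝ (Fin dx) × EuclideanSpace ℝ (Fin dy) =>
        gradX l a w.2) := by
    intro a
    have h1 : LipschitzWith 1 (fun w : EuclideanSpace ℝ (Fin dx) × EuclideanSpace ℝ (Fin dy) =>
        ((a, w.2) : EuclideanSpace ℝ (Fin dx) × EuclideanSpace ℝ (Fin dy))) := by
      have := (LipschitzWith.const (α := EuclideanSpace ℝ (Fin dx) × EuclideanSpace ℝ (Fin dy)) a).prodMk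
        (LipschitzWith.prod_snd (α := EuclideanSpace ℝ (Fin dx)) (β := EuclideanSpace ℝ (Fin dy)))
      simpa using this
    have h2 := LipschitzWith.prod_fst.comp (hlip.comp h1)
    simpa [Function.comp_def] using h2
  have hlw2 : ∀ b : EuclideanSpace ℝ (Fin dy),
      LipschitzWith L₀ (fun w : EuclideanSpace ℝ (Fin dx) × EuclideanSpace ℝ (Fin dy) =>
        gradY l w.1 b) := by
    intro b
    have h1 : LipschitzWith 1 (fun w : EuclideanSpace ℝ (Fin dx) × EuclideanSpace ℝ (Fin dy) =>
        ((w.1, b) : EuclideanSpace ℝ (Fin dx) × EuclideanSpace ℝ (Fin dy))) := by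
      have := (LipschitzWith.prod_fst (α := EuclideanSpace ℝ (Fin dx))
        (β := EuclideanSpace ℝ (Fin dy))).prodMk
        (LipschitzWith.const (α := EuclideanSpace ℝ (Fin dx) × EuclideanSpace ℝ (Fin dy)) b)
      simpa using this
    have h2 := LipschitzWith.prod_snd.comp (hlip.comp h1)
    simpa [Function.comp_def] using h2
  -- Lipschitz in the parameter
  have hpa1 : ∀ (a a' : EuclideanSpace ℝ (Fin dx)) (y : EuclideanSpace ℝ (Fin dy)),
      ‖gradX l a y - gradX l a' y‖ ≤ L₀ * ‖a - a'‖ := by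
    intro a a' y
    have h1 : LipschitzWith 1 (fun a : EuclideanSpace ℝ (Fin dx) =>
        ((a, y) : EuclideanSpace ℝ (Fin dx) × EuclideanSpace ℝ (Fin dy))) := by
      have := (LipschitzWith.id (α := EuclideanSpace ℝ (Fin dx))).prodMk
        (LipschitzWith.const (α := EuclideanSpace ℝ (Fin dx)) y)
      simpa using this
    have h2 : LipschitzWith L₀ (fun a : EuclideanSpace ℝ (Fin dx) => gradX l a y) := by
      have := LipschitzWith.prod_fst.comp (hlip.comp h1)
      simpa [Function.comp_def] using this
    have := h2.dist_le_mul a a'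
    rwa [dist_eq_norm, dist_eq_norm] at this
  have hpa2 : ∀ (b b' : EuclideanSpace ℝ (Fin dy)) (x : EuclideanSpace ℝ (Fin dx)),
      ‖gradY l x b - gradY l x b'‖ ≤ L₀ * ‖b - b'‖ := by
    intro b b' x
    have h1 : LipschitzWith 1 (fun b : EuclideanSpace ℝ (Fin dy) =>
        ((x, b) : EuclideanSpace ℝ (Fin dx) × EuclideanSpace ℝ (Fin dy))) := by
      have := (LipschitzWith.const (α := EuclideanSpace ℝ (Fin dy)) x).prodMk
        (LipschitzWith.id (α := EuclideanSpace ℝ (Fin dy)))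
      simpa using this
    have h2 : LipschitzWith L₀ (fun b : EuclideanSpace ℝ (Fin dy) => gradY l x b) := by
      have := LipschitzWith.prod_snd.comp (hlip.comp h1)
      simpa [Function.comp_def] using this
    have := h2.dist_le_mul b b'
    rwa [dist_eq_norm, dist_eq_norm] at this
  -- integrability
  have hint1 : ∀ (a : EuclideanSpace ℝ (Fin dx))
      (ρ : Measure (EuclideanSpace ℝ (Fin dx) × EuclideanSpace ℝ (Fin dy)))
      [IsProbabilityMeasure ρ],
      Integrable (fun w => gradX l a w.2) ρ := fun a ρ _ =>
    integrable_of_bdd_lip ρ _ C L₀ (hb1 a) (hlw1 a)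
  have hint2 : ∀ (b : EuclideanSpace ℝ (Fin dy))
      (ρ : Measure (EuclideanSpace ℝ (Fin dx) × EuclideanSpace ℝ (Fin dy)))
      [IsProbabilityMeasure ρ],
      Integrable (fun w => gradY l w.1 b) ρ := fun b ρ _ =>
    integrable_of_bdd_lip ρ _ C L₀ (hb2 b) (hlw2 b)
  -- parameter shift bounds
  have hA1 : ‖(∫ w, gradX l z.1 w.2 ∂μ) - ∫ w, gradX l z'.1 w.2 ∂μ‖ ≤ L₀ * ‖z.1 - z'.1‖ := by
    rw [← integral_sub (hint1 z.1 μ) (hint1 z'.1 μ)]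
    have := norm_integral_le_of_norm_le_const (μ := μ)
      (f := fun w : EuclideanSpace ℝ (Fin dx) × EuclideanSpace ℝ (Fin dy) =>
        gradX l z.1 w.2 - gradX l z'.1 w.2) (C := (L₀ : ℝ) * ‖z.1 - z'.1‖)
      (Filter.Eventually.of_forall (fun w => hpa1 z.1 z'.1 w.2))
    simpa using this
  have hA2 : ‖(∫ w, gradY l w.1 z.2 ∂μ) - ∫ w, gradY l w.1 z'.2 ∂μ‖ ≤ L₀ * ‖z.2 - z'.2‖ := by
    rw [← integral_sub (hint2 z.2 μ) (hint2 z'.2 μ)]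
    have := norm_integral_le_of_norm_le_const (μ := μ)
      (f := fun w : EuclideanSpace ℝ (Fin dx) × EuclideanSpace ℝ (Fin dy) =>
        gradY l w.1 z.2 - gradY l w.1 z'.2) (C := (L₀ : ℝ) * ‖z.2 - z'.2‖)
      (Filter.Eventually.of_forall (fun w => hpa2 z.2 z'.2 w.1))
    simpa using this
  -- measure shift bounds
  have hB1 : ‖(∫ w, gradX l z'.1 w.2 ∂μ) - ∫ w, gradX l z'.1 w.2 ∂ν‖ ≤
      ((C : ℝ) + L₀) * dBL μ ν :=
    key_dual μ ν _ C L₀ (hb1 z'.1) (hlw1 z'.1)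
  have hB2 : ‖(∫ w, gradY l w.1 z'.2 ∂μ) - ∫ w, gradY l w.1 z'.2 ∂ν‖ ≤
      ((C : ℝ) + L₀) * dBL μ ν :=
    key_dual μ ν _ C L₀ (hb2 z'.2) (hlw2 z'.2)
  -- assemble
  have e1 : ‖bOne l z μ - bOne l z' ν‖ =
      ‖(∫ w, gradX l z.1 w.2 ∂μ) - ∫ w, gradX l z'.1 w.2 ∂ν‖ := by
    have : bOne l z μ - bOne l z' ν =
        -((∫ w, gradX l z.1 w.2 ∂μ) - ∫ w, gradX l z'.1 w.2 ∂ν) := by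
      simp only [bOne]; abel
    rw [this, norm_neg]
  have e2 : ‖bTwo l z μ - bTwo l z' ν‖ =
      ‖(∫ w, gradY l w.1 z.2 ∂μ) - ∫ w, gradY l w.1 z'.2 ∂ν‖ := rfl
  have t1 : ‖(∫ w, gradX l z.1 w.2 ∂μ) - ∫ w, gradX l z'.1 w.2 ∂ν‖ ≤
      ((C : ℝ) + L₀) * dBL μ ν + L₀ * ‖z.1 - z'.1‖ := by
    have h := norm_sub_le_norm_sub_add_norm_sub (∫ w, gradX l z.1 w.2 ∂μ)
      (∫ w, gradX l z'.1 w.2 ∂μ) (∫ w, gradX l z'.1 w.2 ∂ν)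
    linarith [hA1, hB1]
  have t2 : ‖(∫ w, gradY l w.1 z.2 ∂μ) - ∫ w, gradY l w.1 z'.2 ∂ν‖ ≤
      ((C : ℝ) + L₀) * dBL μ ν + L₀ * ‖z.2 - z'.2‖ := by
    have h := norm_sub_le_norm_sub_add_norm_sub (∫ w, gradY l w.1 z.2 ∂μ)
      (∫ w, gradY l w.1 z'.2 ∂μ) (∫ w, gradY l w.1 z'.2 ∂ν)
    linarith [hA2, hB2]
  rw [e1, e2]
  push_cast
  linarith [t1, t2]
end

section
/- Let d_x, d_y ≥ 1 and let l : ℝ^{d_x} × ℝ^{d_y} → ℝ be continuous with |l(x,y)| ≤ M for all (x,y) and such that for every y the map x ↦ l(x,y) is Lipschitz with constant C. Then for all Borel probability measures μ, μ' on ℝ^{d_x}, | sup_{κ ∈ P(ℝ^{d_y})} L(μ, κ) − sup_{κ ∈ P(ℝ^{d_y})} L(μ', κ) | ≤ (M + C) · d_BL(μ, μ'), where both suprema are taken over all Borel probability measures κ on ℝ^{d_y} (and are finite, bounded by M). -/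
open MeasureTheory NNReal

lemma abs_integral_le' {X : Type*} [MeasurableSpace X] (μ : Measure X) [IsProbabilityMeasure μ]
    (f : X → ℝ) (M : ℝ) (hb : ∀ x, |f x| ≤ M) : |∫ x, f x ∂μ| ≤ M := by
  have h := norm_integral_le_of_norm_le_const (μ := μ) (f := f) (C := M)
    (ae_of_all _ fun x => by rw [Real.norm_eq_abs]; exact hb x)
  simpa [Real.norm_eq_abs] using h

lemma integrable_of_bdd' {X : Type*} [MeasurableSpace X] {μ : Measure X} [IsProbabilityMeasure μ]
    {f : X → ℝ} (hm : AEStronglyMeasurable f μ) {M : ℝ} (hb : ∀ x, |f x| ≤ M) :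
    Integrable f μ :=
  Integrable.mono' (integrable_const M) hm (ae_of_all _ fun x => by simpa using hb x)

lemma key_pointwise {X : Type*} [MetricSpace X] [MeasurableSpace X] [BorelSpace X]
    (μ μ' : Measure X) [IsProbabilityMeasure μ] [IsProbabilityMeasure μ']
    (g : X → ℝ) (M : ℝ) (C : ℝ≥0) (hM : 0 ≤ M)
    (hb : ∀ x, |g x| ≤ M) (hl : LipschitzWith C g) :
    (∫ x, g x ∂μ) - ∫ x, g x ∂μ' ≤ (M + C) * dBL μ μ' := by
  set s : ℝ := M + C with hs
  have hs0 : 0 ≤ s := by positivity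
  rcases eq_or_lt_of_le hs0 with h0 | hpos
  · -- s = 0 : M = 0, g = 0
    have hM0 : M = 0 := by
      have : (C : ℝ) ≥ 0 := C.coe_nonneg
      have := hs ▸ h0.symm
      nlinarith [C.coe_nonneg]
    have hg : ∀ x, g x = 0 := fun x => abs_eq_zero.1 (le_antisymm (hM0 ▸ hb x) (abs_nonneg _))
    simp [hg, ← h0]
  · set f : X → ℝ := fun x => g x / s with hf
    have hmem : ((∫ x, f x ∂μ) - ∫ x, f x ∂μ') ∈ {r : ℝ | ∃ f : X → ℝ,
        (∃ a b : ℝ, 0 ≤ a ∧ 0 ≤ b ∧ a + b ≤ 1 ∧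
        (∀ x, |f x| ≤ a) ∧ LipschitzWith b.toNNReal f) ∧
        r = (∫ x, f x ∂μ) - ∫ x, f x ∂μ'} := by
      refine ⟨f, ⟨M / s, C / s, by positivity, by positivity, le_of_eq (by field_simp; exact hs.symm), ?_, ?_⟩, rfl⟩
      · intro x
        rw [hf, abs_div, abs_of_pos hpos]
        gcongr
        exact hb x
      · refine LipschitzWith.of_dist_le_mul fun x y => ?_
        have hcoe : (((C : ℝ) / s).toNNReal : ℝ) = (C : ℝ) / s :=
          Real.coe_toNNReal _ (by positivity)
        rw [hcoe, hf]
        have hd := hl.dist_le_mul x y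
        rw [Real.dist_eq] at hd
        simp only
        rw [Real.dist_eq, div_sub_div_same, abs_div, abs_of_pos hpos, div_mul_eq_mul_div]
        gcongr
    have hle : ((∫ x, f x ∂μ) - ∫ x, f x ∂μ') ≤ dBL μ μ' :=
      le_csSup (dBL_bddAbove μ μ') hmem
    have heq : ∀ ν : Measure X, ∫ x, f x ∂ν = (∫ x, g x ∂ν) / s := fun ν => integral_div s g
    rw [heq, heq] at hle
    calc (∫ x, g x ∂μ) - ∫ x, g x ∂μ'
        = s * ((∫ x, g x ∂μ) / s - (∫ x, g x ∂μ') / s) := by field_simp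
      _ ≤ s * dBL μ μ' := mul_le_mul_of_nonneg_left hle hs0

lemma dBL_comm {S : Type*} [MetricSpace S] [MeasurableSpace S]
    (μ ν : Measure S) : dBL μ ν = dBL ν μ := by
  unfold dBL
  congr 1
  ext r
  constructor <;> rintro ⟨f, ⟨a, b, ha, hb, hab, hfa, hfl⟩, rfl⟩ <;>
    exact ⟨-f, ⟨a, b, ha, hb, hab, fun x => by simpa using hfa x, hfl.neg⟩,
      by simp [integral_neg]; ring⟩

noncomputable def Lexp {dx dy : ℕ}
    (l : EuclideanSpace ℝ (Fin dx) × EuclideanSpace ℝ (Fin dy) → ℝ)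
    (μ : Measure (EuclideanSpace ℝ (Fin dx)))
    (ν : Measure (EuclideanSpace ℝ (Fin dy))) : ℝ :=
  ∫ y, (∫ x, l (x, y) ∂μ) ∂ν

lemma key_kappa {dx dy : ℕ}
    (l : EuclideanSpace ℝ (Fin dx) × EuclideanSpace ℝ (Fin dy) → ℝ)
    (M : ℝ) (C : ℝ≥0) (hc : Continuous l)
    (hb : ∀ x y, |l (x, y)| ≤ M)
    (hlx : ∀ y, LipschitzWith C (fun x => l (x, y)))
    (μ μ' : Measure (EuclideanSpace ℝ (Fin dx)))
    [IsProbabilityMeasure μ] [IsProbabilityMeasure μ']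
    (κ : Measure (EuclideanSpace ℝ (Fin dy))) [IsProbabilityMeasure κ] :
    Lexp l μ κ - Lexp l μ' κ ≤ (M + C) * dBL μ μ' := by
  have hM : 0 ≤ M := le_trans (abs_nonneg _) (hb 0 0)
  set F : EuclideanSpace ℝ (Fin dy) → ℝ := fun y => ∫ x, l (x, y) ∂μ with hF
  set G : EuclideanSpace ℝ (Fin dy) → ℝ := fun y => ∫ x, l (x, y) ∂μ' with hG
  have hFm : StronglyMeasurable F := hc.stronglyMeasurable.integral_prod_left'
  have hGm : StronglyMeasurable G := hc.stronglyMeasurable.integral_prod_left'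
  have hFb : ∀ y, |F y| ≤ M := fun y => abs_integral_le' μ _ M (fun x => hb x y)
  have hGb : ∀ y, |G y| ≤ M := fun y => abs_integral_le' μ' _ M (fun x => hb x y)
  have hFi : Integrable F κ := integrable_of_bdd' hFm.aestronglyMeasurable hFb
  have hGi : Integrable G κ := integrable_of_bdd' hGm.aestronglyMeasurable hGb
  have hsub : Lexp l μ κ - Lexp l μ' κ = ∫ y, (F y - G y) ∂κ :=
    (integral_sub hFi hGi).symm
  rw [hsub]
  have hpt : ∀ y, F y - G y ≤ (M + C) * dBL μ μ' := fun y =>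
    key_pointwise μ μ' (fun x => l (x, y)) M C hM (fun x => hb x y) (hlx y)
  calc ∫ y, (F y - G y) ∂κ ≤ ∫ _, (M + C) * dBL μ μ' ∂κ :=
        integral_mono (hFi.sub hGi) (integrable_const _) hpt
    _ = (M + C) * dBL μ μ' := by simp

theorem stmt5 {dx dy : ℕ} (hdx : 1 ≤ dx) (hdy : 1 ≤ dy)
    (l : EuclideanSpace ℝ (Fin dx) × EuclideanSpace ℝ (Fin dy) → ℝ)
    (M : ℝ) (C : ℝ≥0) (hc : Continuous l)
    (hb : ∀ x y, |l (x, y)| ≤ M)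
    (hlx : ∀ y, LipschitzWith C (fun x => l (x, y)))
    (μ μ' : Measure (EuclideanSpace ℝ (Fin dx)))
    [IsProbabilityMeasure μ] [IsProbabilityMeasure μ'] :
    (∀ κ : ProbabilityMeasure (EuclideanSpace ℝ (Fin dy)),
        Lexp l μ (κ : Measure (EuclideanSpace ℝ (Fin dy))) ≤ M) ∧
    |(⨆ κ : ProbabilityMeasure (EuclideanSpace ℝ (Fin dy)),
        Lexp l μ (κ : Measure (EuclideanSpace ℝ (Fin dy)))) -
      ⨆ κ : ProbabilityMeasure (EuclideanSpace ℝ (Fin dy)),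
        Lexp l μ' (κ : Measure (EuclideanSpace ℝ (Fin dy)))| ≤ (M + C) * dBL μ μ' := by
  have boundμ : ∀ (ν : Measure (EuclideanSpace ℝ (Fin dx))) [IsProbabilityMeasure ν]
      (κ : ProbabilityMeasure (EuclideanSpace ℝ (Fin dy))),
      |Lexp l ν (κ : Measure (EuclideanSpace ℝ (Fin dy)))| ≤ M := by
    intro ν _ κ
    exact abs_integral_le' (κ : Measure _) _ M
      (fun y => abs_integral_le' ν _ M (fun x => hb x y))
  refine ⟨fun κ => le_of_abs_le (boundμ μ κ), ?_⟩
  haveI : Nonempty (ProbabilityMeasure (EuclideanSpace ℝ (Fin dy))) :=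
    ⟨⟨Measure.dirac 0, Measure.dirac.isProbabilityMeasure⟩⟩
  set A := fun κ : ProbabilityMeasure (EuclideanSpace ℝ (Fin dy)) =>
    Lexp l μ (κ : Measure (EuclideanSpace ℝ (Fin dy))) with hA
  set B := fun κ : ProbabilityMeasure (EuclideanSpace ℝ (Fin dy)) =>
    Lexp l μ' (κ : Measure (EuclideanSpace ℝ (Fin dy))) with hB
  have bddA : BddAbove (Set.range A) :=
    ⟨M, by rintro r ⟨κ, rfl⟩; exact le_of_abs_le (boundμ μ κ)⟩
  have bddB : BddAbove (Set.range B) :=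
    ⟨M, by rintro r ⟨κ, rfl⟩; exact le_of_abs_le (boundμ μ' κ)⟩
  rw [abs_sub_le_iff]
  constructor
  · rw [sub_le_iff_le_add]
    refine ciSup_le fun κ => ?_
    have h1 := key_kappa l M C hc hb hlx μ μ' (κ : Measure _)
    have h2 := le_ciSup bddB κ
    simp only [hA, hB] at *
    linarith
  · rw [sub_le_iff_le_add]
    refine ciSup_le fun κ => ?_
    have h1 := key_kappa l M C hc hb hlx μ' μ (κ : Measure _)
    rw [dBL_comm μ' μ] at h1
    have h2 := le_ciSup bddA κ
    simp only [hA, hB] at *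
    linarith
end

section
/- Let d_x, d_y ≥ 1 and let l : ℝ^{d_x} × ℝ^{d_y} → ℝ be continuous with |l(x,y)| ≤ M for all (x,y) and such that for every x the map y ↦ l(x,y) is Lipschitz with constant C. Then for all Borel probability measures ν, ν' on ℝ^{d_y}, | inf_{κ ∈ P(ℝ^{d_x})} L(κ, ν) − inf_{κ ∈ P(ℝ^{d_x})} L(κ, ν') | ≤ (M + C) · d_BL(ν, ν'), where both infima are taken over all Borel probability measures κ on ℝ^{d_x} (and are finite, bounded below by −M). -/
open MeasureTheory NNReal

theorem stmt6 {dx dy : ℕ} (hdx : 1 ≤ dx) (hdy : 1 ≤ dy)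
    (l : EuclideanSpace ℝ (Fin dx) × EuclideanSpace ℝ (Fin dy) → ℝ)
    (M : ℝ) (C : ℝ≥0) (hc : Continuous l)
    (hb : ∀ x y, |l (x, y)| ≤ M)
    (hly : ∀ x, LipschitzWith C (fun y => l (x, y)))
    (ν ν' : Measure (EuclideanSpace ℝ (Fin dy)))
    [IsProbabilityMeasure ν] [IsProbabilityMeasure ν'] :
    (∀ κ : ProbabilityMeasure (EuclideanSpace ℝ (Fin dx)),
        -M ≤ Lexp l (κ : Measure (EuclideanSpace ℝ (Fin dx))) ν) ∧
    |(⨅ κ : ProbabilityMeasure (EuclideanSpace ℝ (Fin dx)),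
        Lexp l (κ : Measure (EuclideanSpace ℝ (Fin dx))) ν) -
      ⨅ κ : ProbabilityMeasure (EuclideanSpace ℝ (Fin dx)),
        Lexp l (κ : Measure (EuclideanSpace ℝ (Fin dx))) ν'| ≤ (M + C) * dBL ν ν' := by
  have hM : 0 ≤ M := (abs_nonneg _).trans (hb 0 0)
  -- integrability in x
  have hintx : ∀ (y : EuclideanSpace ℝ (Fin dy)) (κ : Measure (EuclideanSpace ℝ (Fin dx)))
      [IsProbabilityMeasure κ], Integrable (fun x => l (x, y)) κ := by
    intro y κ _
    refine (integrable_const M).mono' ?_ ?_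
    · exact (hc.comp (continuous_id.prodMk continuous_const)).aestronglyMeasurable
    · filter_upwards with x
      simpa [Real.norm_eq_abs] using hb x y
  -- bound on inner integral
  have hgb : ∀ (κ : Measure (EuclideanSpace ℝ (Fin dx))) [IsProbabilityMeasure κ]
      (y : EuclideanSpace ℝ (Fin dy)), |∫ x, l (x, y) ∂κ| ≤ M := by
    intro κ _ y
    calc |∫ x, l (x, y) ∂κ| ≤ M * (κ Set.univ).toReal := by
          rw [← Real.norm_eq_abs]
          exact norm_integral_le_of_norm_le_const
            (by filter_upwards with x; simpa [Real.norm_eq_abs] using hb x y)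
      _ = M := by simp
  -- the inner integral is Lipschitz in y
  have hgl : ∀ (κ : Measure (EuclideanSpace ℝ (Fin dx))) [IsProbabilityMeasure κ],
      LipschitzWith C (fun y => ∫ x, l (x, y) ∂κ) := by
    intro κ _
    refine LipschitzWith.of_dist_le_mul fun y y' => ?_
    rw [Real.dist_eq, ← integral_sub (hintx y κ) (hintx y' κ)]
    calc |∫ x, l (x, y) - l (x, y') ∂κ| ≤ (C * dist y y') * (κ Set.univ).toReal := by
          rw [← Real.norm_eq_abs]
          refine norm_integral_le_of_norm_le_const ?_
          filter_upwards with x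
          simpa [Real.dist_eq, Real.norm_eq_abs] using (hly x).dist_le_mul y y'
      _ = C * dist y y' := by simp
  -- bound on Lexp
  have hLb : ∀ (κ : Measure (EuclideanSpace ℝ (Fin dx))) [IsProbabilityMeasure κ]
      (μ : Measure (EuclideanSpace ℝ (Fin dy))) [IsProbabilityMeasure μ],
      |Lexp l κ μ| ≤ M := by
    intro κ _ μ _
    unfold Lexp
    calc |∫ y, (∫ x, l (x, y) ∂κ) ∂μ| ≤ M * (μ Set.univ).toReal := by
          rw [← Real.norm_eq_abs]
          exact norm_integral_le_of_norm_le_const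
            (by filter_upwards with y; simpa [Real.norm_eq_abs] using hgb κ y)
      _ = M := by simp
  -- integrability of inner integral
  have hinty : ∀ (κ : Measure (EuclideanSpace ℝ (Fin dx))) [IsProbabilityMeasure κ]
      (μ : Measure (EuclideanSpace ℝ (Fin dy))) [IsProbabilityMeasure μ],
      Integrable (fun y => ∫ x, l (x, y) ∂κ) μ := by
    intro κ _ μ _
    refine (integrable_const M).mono' (hgl κ).continuous.aestronglyMeasurable ?_
    filter_upwards with y
    simpa [Real.norm_eq_abs] using hgb κ y
  -- the dBL set
  set T := {r : ℝ | ∃ f : EuclideanSpace ℝ (Fin dy) → ℝ, (∃ a b : ℝ, 0 ≤ a ∧ 0 ≤ b ∧ a + b ≤ 1 ∧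
      (∀ x, |f x| ≤ a) ∧ LipschitzWith b.toNNReal f) ∧
    r = (∫ x, f x ∂ν) - ∫ x, f x ∂ν'} with hT
  have hdBL : dBL ν ν' = sSup T := rfl
  have hTbdd : BddAbove T := by
    refine ⟨2, ?_⟩
    rintro r ⟨f, ⟨a, b, ha, hb', hab, hfa, hfl⟩, rfl⟩
    have key : ∀ (μ : Measure (EuclideanSpace ℝ (Fin dy))) [IsProbabilityMeasure μ],
        |∫ x, f x ∂μ| ≤ a := by
      intro μ _
      calc |∫ x, f x ∂μ| ≤ a * (μ Set.univ).toReal := by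
            rw [← Real.norm_eq_abs]
            exact norm_integral_le_of_norm_le_const
              (by filter_upwards with x; simpa [Real.norm_eq_abs] using hfa x)
        _ = a := by simp
    have h1 := le_abs_self (∫ x, f x ∂ν)
    have h2 := neg_abs_le (∫ x, f x ∂ν')
    have h3 := key ν
    have h4 := key ν'
    have ha1 : a ≤ 1 := by linarith
    linarith
  have hT0 : (0 : ℝ) ∈ T := by
    refine ⟨fun _ => 0, ⟨0, 0, le_refl 0, le_refl 0, by norm_num, fun x => by simp, ?_⟩, by simp⟩
    rw [Real.toNNReal_zero]
    exact LipschitzWith.const 0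
  have hdBL0 : 0 ≤ dBL ν ν' := by rw [hdBL]; exact le_csSup hTbdd hT0
  -- key estimate, for arbitrary sign f
  have key : ∀ (κ : Measure (EuclideanSpace ℝ (Fin dx))) [IsProbabilityMeasure κ] (s : ℝ),
      s = 1 ∨ s = -1 →
      s * (Lexp l κ ν - Lexp l κ ν') ≤ (M + C) * dBL ν ν' := by
    intro κ _ s hs
    rcases eq_or_lt_of_le (by positivity : (0:ℝ) ≤ M + C) with h0 | hpos
    · -- M + C = 0 : then M = 0, inner integrals vanish
      have hM0 : M = 0 := le_antisymm (by nlinarith [C.coe_nonneg]) hM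
      have hz : ∀ (μ : Measure (EuclideanSpace ℝ (Fin dy))) [IsProbabilityMeasure μ],
          Lexp l κ μ = 0 := by
        intro μ _
        have h := hLb κ μ
        rw [hM0] at h
        exact abs_eq_zero.mp (le_antisymm h (abs_nonneg _))
      rw [hz ν, hz ν', ← h0]
      simp
    · set g : EuclideanSpace ℝ (Fin dy) → ℝ := fun y => ∫ x, l (x, y) ∂κ with hg
      set f : EuclideanSpace ℝ (Fin dy) → ℝ := fun y => (s / (M + C)) * g y with hf
      have hs1 : |s| = 1 := by rcases hs with rfl | rfl <;> norm_num
      have habs : |s / (M + C)| = 1 / (M + C) := by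
        rw [abs_div, hs1, abs_of_pos hpos]
      have hmem : (∫ x, f x ∂ν) - (∫ x, f x ∂ν') ∈ T := by
        refine ⟨f, ⟨M / (M + C), C / (M + C), by positivity, by positivity, ?_, ?_, ?_⟩, rfl⟩
        · rw [← add_div, div_self hpos.ne']
        · intro y
          rw [hf]
          simp only
          rw [abs_mul, habs, one_div, inv_mul_eq_div]
          gcongr
          exact hgb κ y
        · refine LipschitzWith.of_dist_le_mul fun y y' => ?_
          have h1 := (hgl κ).dist_le_mul y y'
          have h2 : dist (f y) (f y') = |g y - g y'| / (M + C) := by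
            rw [hf]
            simp only
            rw [Real.dist_eq, ← mul_sub, abs_mul, habs, one_div, inv_mul_eq_div]
          rw [h2, Real.coe_toNNReal _ (by positivity), div_mul_eq_mul_div]
          rw [← Real.dist_eq]
          gcongr
      have hle : (∫ x, f x ∂ν) - (∫ x, f x ∂ν') ≤ dBL ν ν' := by
        rw [hdBL]; exact le_csSup hTbdd hmem
      have hint : ∀ (μ : Measure (EuclideanSpace ℝ (Fin dy))) [IsProbabilityMeasure μ],
          ∫ x, f x ∂μ = (s / (M + C)) * Lexp l κ μ := by
        intro μ _
        rw [hf]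
        simp only
        rw [integral_const_mul]
        rfl
      have hrw : s * (Lexp l κ ν - Lexp l κ ν')
          = (M + C) * ((∫ x, f x ∂ν) - (∫ x, f x ∂ν')) := by
        rw [hint ν, hint ν']
        field_simp
      rw [hrw]
      exact mul_le_mul_of_nonneg_left hle (by positivity)
  -- nonemptiness and lower bound of the range
  have : Nonempty (ProbabilityMeasure (EuclideanSpace ℝ (Fin dx))) :=
    ⟨⟨Measure.dirac 0, inferInstance⟩⟩
  have hbdd1 : BddBelow (Set.range fun κ : ProbabilityMeasure (EuclideanSpace ℝ (Fin dx)) =>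
      Lexp l (κ : Measure (EuclideanSpace ℝ (Fin dx))) ν) := by
    refine ⟨-M, ?_⟩
    rintro r ⟨κ, rfl⟩
    have := hLb (κ : Measure (EuclideanSpace ℝ (Fin dx))) ν
    have := neg_abs_le (Lexp l (κ : Measure (EuclideanSpace ℝ (Fin dx))) ν)
    linarith
  have hbdd2 : BddBelow (Set.range fun κ : ProbabilityMeasure (EuclideanSpace ℝ (Fin dx)) =>
      Lexp l (κ : Measure (EuclideanSpace ℝ (Fin dx))) ν') := by
    refine ⟨-M, ?_⟩
    rintro r ⟨κ, rfl⟩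
    have := hLb (κ : Measure (EuclideanSpace ℝ (Fin dx))) ν'
    have := neg_abs_le (Lexp l (κ : Measure (EuclideanSpace ℝ (Fin dx))) ν')
    linarith
  constructor
  · intro κ
    have := hLb (κ : Measure (EuclideanSpace ℝ (Fin dx))) ν
    have := neg_abs_le (Lexp l (κ : Measure (EuclideanSpace ℝ (Fin dx))) ν)
    linarith
  · set A := ⨅ κ : ProbabilityMeasure (EuclideanSpace ℝ (Fin dx)),
        Lexp l (κ : Measure (EuclideanSpace ℝ (Fin dx))) ν with hA
    set B := ⨅ κ : ProbabilityMeasure (EuclideanSpace ℝ (Fin dx)),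
        Lexp l (κ : Measure (EuclideanSpace ℝ (Fin dx))) ν' with hB
    have h1 : A - (M + C) * dBL ν ν' ≤ B := by
      refine le_ciInf fun κ => ?_
      have h2 : A ≤ Lexp l (κ : Measure (EuclideanSpace ℝ (Fin dx))) ν := ciInf_le hbdd1 κ
      have h3 := key (κ : Measure (EuclideanSpace ℝ (Fin dx))) 1 (Or.inl rfl)
      rw [one_mul] at h3
      linarith
    have h4 : B - (M + C) * dBL ν ν' ≤ A := by
      refine le_ciInf fun κ => ?_
      have h2 : B ≤ Lexp l (κ : Measure (EuclideanSpace ℝ (Fin dx))) ν' := ciInf_le hbdd2 κ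
      have h3 := key (κ : Measure (EuclideanSpace ℝ (Fin dx))) (-1) (Or.inr rfl)
      rw [neg_one_mul, neg_sub] at h3
      linarith
    rw [abs_sub_le_iff]
    constructor <;> linarith
end

section
/- Let d_x, d_y ≥ 1 and let l : ℝ^{d_x} × ℝ^{d_y} → ℝ be bounded and Lipschitz. Then the map (μ, ν) ↦ NI(μ, ν) is continuous on P(ℝ^{d_x}) × P(ℝ^{d_y}), where each factor carries the topology of weak convergence of probability measures. -/
open MeasureTheory NNReal ENNReal Set Metric

open MeasureTheory NNReal ENNReal Set Metric

section Key
variable {Ω : Type*} [MeasurableSpace Ω] [PseudoMetricSpace Ω] [OpensMeasurableSpace Ω]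

lemma key_one_sided (μ ν : Measure Ω) [IsProbabilityMeasure μ] [IsProbabilityMeasure ν]
    {f : Ω → ℝ} {K : ℝ≥0} {M : ℝ} (hM : 0 ≤ M)
    (hf : LipschitzWith K f) (hb : ∀ x, |f x| ≤ M)
    {ε : ℝ} (hε : 0 < ε) (h : levyProkhorovEDist μ ν < ENNReal.ofReal ε) :
    ∫ x, f x ∂μ - ∫ x, f x ∂ν ≤ ((K : ℝ) + 2 * M) * ε := by
  set g : BoundedContinuousFunction Ω ℝ :=
    BoundedContinuousFunction.mkOfBound ⟨fun x => f x + M, by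
      exact (hf.continuous).add continuous_const⟩ (2 * M)
      (by
        intro x y
        simp only [ContinuousMap.coe_mk, Real.dist_eq, add_sub_add_right_eq_sub]
        calc |f x - f y| ≤ |f x| + |f y| := abs_sub _ _
          _ ≤ M + M := add_le_add (hb x) (hb y)
          _ = 2 * M := by ring) with hg
  have g_apply : ∀ x, g x = f x + M := fun x => rfl
  have g_nn : ∀ x, 0 ≤ g x := fun x => by
    have := (abs_le.mp (hb x)).1; simp only [g_apply]; linarith
  have g_norm : ‖g‖ ≤ 2 * M := by
    apply BoundedContinuousFunction.norm_le (by positivity) |>.mpr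
    intro x
    have h1 := (abs_le.mp (hb x)).1
    have h2 := (abs_le.mp (hb x)).2
    rw [g_apply, Real.norm_eq_abs, abs_le]
    constructor <;> linarith
  have g_norm_nn : 0 ≤ ‖g‖ := norm_nonneg g
  set c : ℝ := (K : ℝ) * ε with hc
  have hc_nn : 0 ≤ c := by positivity
  -- layer-cake bound from mathlib
  have key := BoundedContinuousFunction.integral_le_of_levyProkhorovEDist_lt μ ν hε h g
    (Filter.Eventually.of_forall g_nn)
  -- the decreasing layer function
  set HE : ℝ → ℝ≥0∞ := fun t => ν {a | t ≤ g a} with hHE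
  set H : ℝ → ℝ := fun t => (HE t).toReal with hH
  have HE_anti : Antitone HE := fun s t hst =>
    measure_mono (fun a ha => hst.trans ha)
  have H_anti : Antitone H := fun s t hst =>
    ENNReal.toReal_mono (measure_ne_top _ _) (HE_anti hst)
  have H_nn : ∀ t, 0 ≤ H t := fun t => ENNReal.toReal_nonneg
  have H_le_one : ∀ t, H t ≤ 1 := by
    intro t
    have h1 : HE t ≤ 1 := prob_le_one
    have := ENNReal.toReal_mono (by norm_num) h1
    simpa using this
  have H_mble : Measurable H := (HE_anti.measurable).ennreal_toReal
  have H_intble : ∀ (s : Set ℝ), volume s ≠ ⊤ → IntegrableOn H s := by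
    intro s hs
    apply Measure.integrableOn_of_bounded hs H_mble.aestronglyMeasurable
    exact Filter.Eventually.of_forall fun t => by
      rw [Real.norm_eq_abs, abs_of_nonneg (H_nn t)]; exact H_le_one t
  -- thickening bound: thickening ε {t ≤ g} ⊆ {t - c ≤ g}
  have thick_sub : ∀ t : ℝ, thickening ε {a | t ≤ g a} ⊆ {a | t - c ≤ g a} := by
    intro t a ha
    rw [mem_thickening_iff] at ha
    obtain ⟨b, hb', hab⟩ := ha
    have hlipg : |g a - g b| ≤ (K : ℝ) * dist a b := by
      simp only [g_apply, add_sub_add_right_eq_sub]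
      have := hf.dist_le_mul a b
      rwa [Real.dist_eq] at this
    have : g b - g a ≤ (K : ℝ) * ε := by
      have h1 : g b - g a ≤ |g a - g b| := by rw [abs_sub_comm]; exact le_abs_self _
      refine h1.trans (hlipg.trans ?_)
      exact mul_le_mul_of_nonneg_left hab.le K.coe_nonneg
    have hb'' : t ≤ g b := hb'
    simp only [mem_setOf_eq]
    linarith
  -- step 1: bound the thickening integral
  have step1 : (∫ t in Ioc 0 ‖g‖, ((ν (thickening ε {a | t ≤ g a})).toReal))
      ≤ ∫ t in Ioc 0 ‖g‖, H (t - c) := by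
    apply setIntegral_mono_on ?_ ?_ measurableSet_Ioc
    · intro t _
      exact ENNReal.toReal_mono (measure_ne_top _ _) (measure_mono (thick_sub t))
    · -- integrability of thickening integrand
      apply Measure.integrableOn_of_bounded (M := 1) measure_Ioc_lt_top.ne
      · apply Measurable.aestronglyMeasurable
        apply Measurable.ennreal_toReal
        apply Antitone.measurable
        intro s t hst
        exact measure_mono <| thickening_subset_of_subset ε (fun a ha => hst.trans ha)
      · exact Filter.Eventually.of_forall fun t => by
          rw [Real.norm_eq_abs, ENNReal.abs_toReal]
          simpa using ENNReal.toReal_mono (by norm_num) (prob_le_one (μ := ν) (s := _))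
    · -- integrability of t ↦ H (t - c)
      apply Measure.integrableOn_of_bounded (M := 1) measure_Ioc_lt_top.ne
      · exact (H_mble.comp (measurable_id.sub measurable_const)).aestronglyMeasurable
      · exact Filter.Eventually.of_forall fun t => by
          rw [Real.norm_eq_abs, abs_of_nonneg (H_nn _)]; exact H_le_one _
  -- step 2: change of variables
  have step2 : (∫ t in Ioc 0 ‖g‖, H (t - c)) = ∫ t in Ioc (-c) (‖g‖ - c), H t := by
    have e1 : ∀ t : ℝ, (Ioc 0 ‖g‖).indicator (fun t => H (t - c)) t
        = (Ioc (-c) (‖g‖ - c)).indicator H (t - c) := by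
      intro t
      by_cases ht : t ∈ Ioc 0 ‖g‖
      · rw [indicator_of_mem ht, indicator_of_mem]
        simp only [mem_Ioc] at ht ⊢
        constructor <;> linarith [ht.1, ht.2]
      · rw [indicator_of_notMem ht, indicator_of_notMem]
        simp only [mem_Ioc] at ht ⊢
        intro hcon
        exact ht ⟨by linarith [hcon.1], by linarith [hcon.2]⟩
    rw [← integral_indicator measurableSet_Ioc, ← integral_indicator measurableSet_Ioc]
    calc ∫ t, (Ioc 0 ‖g‖).indicator (fun t => H (t - c)) t
        = ∫ t, (Ioc (-c) (‖g‖ - c)).indicator H (t - c) := by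
          exact integral_congr_ae (Filter.Eventually.of_forall e1)
      _ = ∫ t, (Ioc (-c) (‖g‖ - c)).indicator H t := by
          exact integral_sub_right_eq_self (fun t => (Ioc (-c) (‖g‖ - c)).indicator H t) c
  -- step 3: bound the shifted integral
  have step3 : (∫ t in Ioc (-c) (‖g‖ - c), H t) ≤ c + ∫ t in Ioc 0 ‖g‖, H t := by
    have hsub : Ioc (-c) (‖g‖ - c) ⊆ Ioc (-c) ‖g‖ := Ioc_subset_Ioc le_rfl (by linarith)
    have h1 : (∫ t in Ioc (-c) (‖g‖ - c), H t) ≤ ∫ t in Ioc (-c) ‖g‖, H t := by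
      apply setIntegral_mono_set (H_intble _ measure_Ioc_lt_top.ne)
        (Filter.Eventually.of_forall H_nn)
        (HasSubset.Subset.eventuallyLE hsub)
    have hunion : Ioc (-c) (0:ℝ) ∪ Ioc 0 ‖g‖ = Ioc (-c) ‖g‖ :=
      Ioc_union_Ioc_eq_Ioc (by linarith) g_norm_nn
    have h2 : (∫ t in Ioc (-c) ‖g‖, H t)
        = (∫ t in Ioc (-c) (0:ℝ), H t) + ∫ t in Ioc 0 ‖g‖, H t := by
      rw [← hunion, setIntegral_union (Ioc_disjoint_Ioc_of_le le_rfl) measurableSet_Ioc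
        (H_intble _ measure_Ioc_lt_top.ne) (H_intble _ measure_Ioc_lt_top.ne)]
    have h3 : (∫ t in Ioc (-c) (0:ℝ), H t) ≤ c := by
      calc (∫ t in Ioc (-c) (0:ℝ), H t) ≤ ∫ _ in Ioc (-c) (0:ℝ), (1:ℝ) := by
            apply setIntegral_mono_on (H_intble _ measure_Ioc_lt_top.ne)
              (integrableOn_const measure_Ioc_lt_top.ne) measurableSet_Ioc
            intro t _; exact H_le_one t
        _ = c := by simp [Real.volume_Ioc]; linarith
    linarith
  -- step 4: layer cake for ν
  have step4 : (∫ t in Ioc 0 ‖g‖, H t) = ∫ x, g x ∂ν :=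
    (BoundedContinuousFunction.integral_eq_integral_meas_le g ν
      (Filter.Eventually.of_forall g_nn)).symm
  -- combine
  have hgint : ∀ (ρ : Measure Ω) [IsProbabilityMeasure ρ], ∫ x, g x ∂ρ = (∫ x, f x ∂ρ) + M := by
    intro ρ _
    have : ∫ x, g x ∂ρ = ∫ x, (f x + M) ∂ρ := rfl
    rw [this, integral_add ?_ (integrable_const M), integral_const]
    · simp
    · exact ⟨(hf.continuous.measurable).aestronglyMeasurable, by
        apply HasFiniteIntegral.of_bounded (C := M)
        exact Filter.Eventually.of_forall fun x => by
          rw [Real.norm_eq_abs]; exact hb x⟩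
  have final : ∫ x, g x ∂μ ≤ (∫ x, g x ∂ν) + c + ε * ‖g‖ := by
    calc ∫ x, g x ∂μ ≤ (∫ t in Ioc 0 ‖g‖, ((ν (thickening ε {a | t ≤ g a})).toReal)) + ε * ‖g‖ := key
      _ ≤ (∫ t in Ioc 0 ‖g‖, H (t - c)) + ε * ‖g‖ := by linarith
      _ = (∫ t in Ioc (-c) (‖g‖ - c), H t) + ε * ‖g‖ := by rw [step2]
      _ ≤ (c + ∫ t in Ioc 0 ‖g‖, H t) + ε * ‖g‖ := by linarith
      _ = (∫ x, g x ∂ν) + c + ε * ‖g‖ := by rw [step4]; ring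
  rw [hgint μ, hgint ν] at final
  have hεg : ε * ‖g‖ ≤ ε * (2 * M) := mul_le_mul_of_nonneg_left g_norm hε.le
  have : (K:ℝ) + 2*M ≥ 0 := by positivity
  nlinarith [final]


lemma key_abs' (μ ν : Measure Ω) [IsProbabilityMeasure μ] [IsProbabilityMeasure ν]
    {f : Ω → ℝ} {K : ℝ≥0} {M : ℝ} (hM : 0 ≤ M)
    (hf : LipschitzWith K f) (hb : ∀ x, |f x| ≤ M)
    {ε : ℝ} (hε : 0 < ε) (h : levyProkhorovEDist μ ν < ENNReal.ofReal ε) :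
    |∫ x, f x ∂μ - ∫ x, f x ∂ν| ≤ ((K : ℝ) + 2 * M) * ε := by
  rw [abs_sub_le_iff]
  refine ⟨key_one_sided μ ν hM hf hb hε h, key_one_sided ν μ hM hf hb hε ?_⟩
  rwa [levyProkhorovEDist_comm]

/-- A function on probability measures which is uniformly continuous w.r.t. the
Lévy-Prokhorov distance is continuous for the topology of convergence in distribution. -/
lemma cont_of_LP' [TopologicalSpace.SeparableSpace Ω] {Φ : ProbabilityMeasure Ω → ℝ} {C : ℝ}
    (hC : 0 ≤ C)
    (h : ∀ (μ ν : ProbabilityMeasure Ω) (ε : ℝ), 0 < ε →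
      levyProkhorovEDist μ.toMeasure ν.toMeasure < ENNReal.ofReal ε → |Φ μ - Φ ν| ≤ C * ε) :
    Continuous Φ := by
  have Fcont : Continuous (fun μ : LevyProkhorov (ProbabilityMeasure Ω) =>
      Φ (LevyProkhorov.toMeasureEquiv μ)) := by
    rw [Metric.continuous_iff]
    intro b ε hε
    have hC1 : (0:ℝ) < C + 1 := by linarith
    refine ⟨ε / (C + 1), by positivity, fun a ha => ?_⟩
    have hne : levyProkhorovEDist (LevyProkhorov.toMeasureEquiv a : ProbabilityMeasure Ω).toMeasure
        (LevyProkhorov.toMeasureEquiv b : ProbabilityMeasure Ω).toMeasure ≠ ⊤ :=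
      levyProkhorovEDist_ne_top _ _
    have hlt : levyProkhorovEDist (LevyProkhorov.toMeasureEquiv a : ProbabilityMeasure Ω).toMeasure
        (LevyProkhorov.toMeasureEquiv b : ProbabilityMeasure Ω).toMeasure
        < ENNReal.ofReal (ε / (C + 1)) := by
      rw [← ENNReal.ofReal_toReal hne]
      exact (ENNReal.ofReal_lt_ofReal_iff (by positivity)).mpr ha
    have key := h _ _ (ε / (C + 1)) (by positivity) hlt
    have e1 : (C + 1) * (ε / (C + 1)) = ε := by field_simp
    have e2 : 0 < ε / (C + 1) := by positivity
    rw [Real.dist_eq]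
    calc |Φ (LevyProkhorov.toMeasureEquiv a) - Φ (LevyProkhorov.toMeasureEquiv b)| ≤ C * (ε / (C + 1)) := key
      _ < ε := by nlinarith
  exact Fcont.comp (LevyProkhorov.probabilityMeasureHomeomorph (Ω := Ω)).continuous


end Key

/-- The Nikaidô–Isoda error
`NI(μ, ν) = sup_{ν'} L(μ, ν') - inf_{μ'} L(μ', ν)`, with the supremum and
infimum over Borel probability measures. -/
noncomputable def NIerr {dx dy : ℕ}
    (l : EuclideanSpace ℝ (Fin dx) × EuclideanSpace ℝ (Fin dy) → ℝ)
    (μ : Measure (EuclideanSpace ℝ (Fin dx)))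
    (ν : Measure (EuclideanSpace ℝ (Fin dy))) : ℝ :=
  (⨆ ν' : ProbabilityMeasure (EuclideanSpace ℝ (Fin dy)),
      Lexp l μ (ν' : Measure (EuclideanSpace ℝ (Fin dy)))) -
    ⨅ μ' : ProbabilityMeasure (EuclideanSpace ℝ (Fin dx)),
      Lexp l (μ' : Measure (EuclideanSpace ℝ (Fin dx))) ν

/-- The Nikaidô–Isoda error is continuous in `(μ, ν)` for the topology of weak
convergence of probability measures, when `l` is bounded and Lipschitz. -/
theorem stmt8 {dx dy : ℕ} (hdx : 1 ≤ dx) (hdy : 1 ≤ dy)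
    (l : EuclideanSpace ℝ (Fin dx) × EuclideanSpace ℝ (Fin dy) → ℝ)
    (M : ℝ) (K : ℝ≥0)
    (hb : ∀ p, |l p| ≤ M) (hlip : LipschitzWith K l) :
    Continuous (fun p : ProbabilityMeasure (EuclideanSpace ℝ (Fin dx)) ×
        ProbabilityMeasure (EuclideanSpace ℝ (Fin dy)) =>
      NIerr l (p.1 : Measure (EuclideanSpace ℝ (Fin dx)))
        (p.2 : Measure (EuclideanSpace ℝ (Fin dy)))) := by
  have hM : 0 ≤ M := (abs_nonneg _).trans (hb (0, 0))
  set C : ℝ := (K : ℝ) + 2 * M with hCdef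
  have hC : 0 ≤ C := by positivity
  have hNEX : Nonempty (ProbabilityMeasure (EuclideanSpace ℝ (Fin dx))) :=
    ⟨⟨Measure.dirac 0, Measure.dirac.isProbabilityMeasure⟩⟩
  have hNEY : Nonempty (ProbabilityMeasure (EuclideanSpace ℝ (Fin dy))) :=
    ⟨⟨Measure.dirac 0, Measure.dirac.isProbabilityMeasure⟩⟩
  -- basic facts about slices of l
  have hxlip : ∀ y, LipschitzWith K (fun x => l (x, y)) := fun y => by
    simpa [Function.comp_def] using hlip.comp (LipschitzWith.prodMk_right y)
  have hxint : ∀ (μ : Measure (EuclideanSpace ℝ (Fin dx))) [IsProbabilityMeasure μ] (y),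
      Integrable (fun x => l (x, y)) μ := by
    intro μ _ y
    refine ⟨((hxlip y).continuous.measurable).aestronglyMeasurable, ?_⟩
    exact HasFiniteIntegral.of_bounded (C := M)
      (Filter.Eventually.of_forall fun x => by rw [Real.norm_eq_abs]; exact hb _)
  -- the function y ↦ ∫ x, l (x, y) dμ
  have hyb : ∀ (μ : Measure (EuclideanSpace ℝ (Fin dx))) [IsProbabilityMeasure μ] (y),
      |∫ x, l (x, y) ∂μ| ≤ M := by
    intro μ _ y
    have := norm_integral_le_of_norm_le_const (μ := μ) (f := fun x => l (x, y)) (C := M)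
      (Filter.Eventually.of_forall fun x => by rw [Real.norm_eq_abs]; exact hb _)
    simpa using this
  have hylip : ∀ (μ : Measure (EuclideanSpace ℝ (Fin dx))) [IsProbabilityMeasure μ],
      LipschitzWith K (fun y => ∫ x, l (x, y) ∂μ) := by
    intro μ _
    apply LipschitzWith.of_dist_le_mul
    intro y z
    rw [Real.dist_eq, ← integral_sub (hxint μ y) (hxint μ z)]
    have := norm_integral_le_of_norm_le_const (μ := μ)
      (f := fun x => l (x, y) - l (x, z)) (C := (K : ℝ) * dist y z)
      (Filter.Eventually.of_forall fun x => by
        rw [Real.norm_eq_abs, ← Real.dist_eq]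
        have h1 := hlip.dist_le_mul (x, y) (x, z)
        have h2 : dist ((x, y)) ((x, z)) = dist y z := by
          simp only [Prod.dist_eq, dist_self]
          exact max_eq_right dist_nonneg
        rwa [h2] at h1)
    simpa using this
  have hyint : ∀ (μ : Measure (EuclideanSpace ℝ (Fin dx))) [IsProbabilityMeasure μ]
      (ν : Measure (EuclideanSpace ℝ (Fin dy))) [IsProbabilityMeasure ν],
      Integrable (fun y => ∫ x, l (x, y) ∂μ) ν := by
    intro μ _ ν _
    refine ⟨((hylip μ).continuous.measurable).aestronglyMeasurable, ?_⟩
    exact HasFiniteIntegral.of_bounded (C := M)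
      (Filter.Eventually.of_forall fun y => by rw [Real.norm_eq_abs]; exact hyb μ y)
  have hLb : ∀ (μ : ProbabilityMeasure (EuclideanSpace ℝ (Fin dx)))
      (ν : ProbabilityMeasure (EuclideanSpace ℝ (Fin dy))),
      |Lexp l μ.toMeasure ν.toMeasure| ≤ M := by
    intro μ ν
    have := norm_integral_le_of_norm_le_const (μ := ν.toMeasure)
      (f := fun y => ∫ x, l (x, y) ∂μ.toMeasure) (C := M)
      (Filter.Eventually.of_forall fun y => by rw [Real.norm_eq_abs]; exact hyb _ y)
    simpa [Lexp] using this
  -- bddAbove / bddBelow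
  have hbddA : ∀ (μ : ProbabilityMeasure (EuclideanSpace ℝ (Fin dx))),
      BddAbove (Set.range fun ν' : ProbabilityMeasure (EuclideanSpace ℝ (Fin dy)) =>
        Lexp l μ.toMeasure ν'.toMeasure) := by
    intro μ
    refine ⟨M, ?_⟩
    rintro r ⟨ν', rfl⟩
    exact (abs_le.mp (hLb μ ν')).2
  have hbddB : ∀ (ν : ProbabilityMeasure (EuclideanSpace ℝ (Fin dy))),
      BddBelow (Set.range fun μ' : ProbabilityMeasure (EuclideanSpace ℝ (Fin dx)) =>
        Lexp l μ'.toMeasure ν.toMeasure) := by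
    intro ν
    refine ⟨-M, ?_⟩
    rintro r ⟨μ', rfl⟩
    exact (abs_le.mp (hLb μ' ν)).1
  -- continuity of the sup part
  have hΦcont : Continuous (fun μ : ProbabilityMeasure (EuclideanSpace ℝ (Fin dx)) =>
      ⨆ ν' : ProbabilityMeasure (EuclideanSpace ℝ (Fin dy)),
        Lexp l μ.toMeasure ν'.toMeasure) := by
    apply cont_of_LP' hC
    intro μ₁ μ₂ ε hε hLP
    have hdiff : ∀ (a b : ProbabilityMeasure (EuclideanSpace ℝ (Fin dx))),
        levyProkhorovEDist a.toMeasure b.toMeasure < ENNReal.ofReal ε →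
        (⨆ ν' : ProbabilityMeasure (EuclideanSpace ℝ (Fin dy)),
            Lexp l a.toMeasure ν'.toMeasure) ≤
          (⨆ ν' : ProbabilityMeasure (EuclideanSpace ℝ (Fin dy)),
            Lexp l b.toMeasure ν'.toMeasure) + C * ε := by
      intro a b hab
      apply ciSup_le
      intro ν'
      have h1 : Lexp l a.toMeasure ν'.toMeasure ≤ Lexp l b.toMeasure ν'.toMeasure + C * ε := by
        have hpt : ∀ y, (∫ x, l (x, y) ∂a.toMeasure) - (∫ x, l (x, y) ∂b.toMeasure) ≤ C * ε :=
          fun y => (abs_le.mp (key_abs' a.toMeasure b.toMeasure hM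
            (hxlip y) (fun x => hb _) hε hab)).2
        have hsub : Lexp l a.toMeasure ν'.toMeasure - Lexp l b.toMeasure ν'.toMeasure
            = ∫ y, ((∫ x, l (x, y) ∂a.toMeasure) - (∫ x, l (x, y) ∂b.toMeasure))
              ∂ν'.toMeasure := by
          rw [Lexp, Lexp, ← integral_sub (hyint _ _) (hyint _ _)]
        have hle : (∫ y, ((∫ x, l (x, y) ∂a.toMeasure) - (∫ x, l (x, y) ∂b.toMeasure))
            ∂ν'.toMeasure) ≤ C * ε := by
          calc (∫ y, ((∫ x, l (x, y) ∂a.toMeasure) - (∫ x, l (x, y) ∂b.toMeasure))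
              ∂ν'.toMeasure) ≤ ∫ _, C * ε ∂ν'.toMeasure := by
                apply integral_mono ((hyint _ _).sub (hyint _ _)) (integrable_const _)
                exact hpt
            _ = C * ε := by simp
        linarith [hsub ▸ hle]
      exact h1.trans (add_le_add_left (le_ciSup (hbddA b) ν') _)
    have h2 : levyProkhorovEDist μ₂.toMeasure μ₁.toMeasure < ENNReal.ofReal ε := by
      rwa [levyProkhorovEDist_comm]
    rw [abs_sub_le_iff]
    constructor
    · linarith [hdiff μ₁ μ₂ hLP]
    · linarith [hdiff μ₂ μ₁ h2]
  -- continuity of the inf part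
  have hΨcont : Continuous (fun ν : ProbabilityMeasure (EuclideanSpace ℝ (Fin dy)) =>
      ⨅ μ' : ProbabilityMeasure (EuclideanSpace ℝ (Fin dx)),
        Lexp l μ'.toMeasure ν.toMeasure) := by
    apply cont_of_LP' hC
    intro ν₁ ν₂ ε hε hLP
    have hdiff : ∀ (a b : ProbabilityMeasure (EuclideanSpace ℝ (Fin dy))),
        levyProkhorovEDist a.toMeasure b.toMeasure < ENNReal.ofReal ε →
        (⨅ μ' : ProbabilityMeasure (EuclideanSpace ℝ (Fin dx)),
            Lexp l μ'.toMeasure a.toMeasure) ≤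
          (⨅ μ' : ProbabilityMeasure (EuclideanSpace ℝ (Fin dx)),
            Lexp l μ'.toMeasure b.toMeasure) + C * ε := by
      intro a b hab
      rw [← sub_le_iff_le_add]
      apply le_ciInf
      intro μ'
      rw [sub_le_iff_le_add]
      have h1 : Lexp l μ'.toMeasure a.toMeasure ≤ Lexp l μ'.toMeasure b.toMeasure + C * ε := by
        have := (abs_le.mp (key_abs' a.toMeasure b.toMeasure hM
          (hylip μ'.toMeasure) (hyb μ'.toMeasure) hε hab)).2
        rw [← hCdef] at this
        have he : Lexp l μ'.toMeasure a.toMeasure = ∫ y, (∫ x, l (x, y) ∂μ'.toMeasure)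
          ∂a.toMeasure := rfl
        rw [Lexp, Lexp]
        linarith [this, hCdef]
      exact (ciInf_le (hbddB a) μ').trans h1
    have h2 : levyProkhorovEDist ν₂.toMeasure ν₁.toMeasure < ENNReal.ofReal ε := by
      rwa [levyProkhorovEDist_comm]
    rw [abs_sub_le_iff]
    constructor
    · linarith [hdiff ν₁ ν₂ hLP]
    · linarith [hdiff ν₂ ν₁ h2]
  unfold NIerr
  exact (hΦcont.comp continuous_fst).sub (hΨcont.comp continuous_snd)
end
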